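/- A monoid M is strongly Markov as a semigroup if and only if it is strongly Markov as a monoid. -/

import Mathlib

open Function

/-- A language is regular if it is accepted by a deterministic finite automaton
with a finite state set. -/
def RegularLang {A : Type} (L : Language A) : Prop :=
  ∃ (Q : Type) (_ : Fintype Q) (M : DFA A Q), M.accepts = L

/-- The product of a nonempty word under the letter-assignment `φ`; the empty
word is sent to `none`. This is the induced map `φ⁺` on nonempty words. -/
def prodPlus {A S : Type} [Semigroup S] (φ : A → S) : List A → Option S
  | [] => none
  | a :: w => some (w.foldl (fun s b => s * φ b) (φ a))

/-- The induced monoid homomorphism `φ*` from the free monoid of words. -/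
def monProd {A M : Type} [Monoid M] (φ : A → M) (w : List A) : M :=
  (w.map φ).prod

/-- A semigroup Markov language for `S` over `A` (with respect to `φ`): a regular,
`+`-prefix-closed language of nonempty words mapping bijectively onto `S` under `φ⁺`. -/
structure IsSgMarkovLang {A S : Type} [Semigroup S] (φ : A → S) (L : Language A) : Prop where
  regular : RegularLang L
  not_empty_mem : [] ∉ L
  plus_prefix_closed : ∀ u v : List A, u ≠ [] → v ≠ [] → u ++ v ∈ L → u ∈ L
  unique_rep : ∀ s : S, ∃! w : List A, w ∈ L ∧ prodPlus φ w = some s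

/-- A robust semigroup Markov language: additionally every word of `L` has minimal
length among (nonempty) words representing the same element. -/
structure IsRobustSgMarkovLang {A S : Type} [Semigroup S] (φ : A → S) (L : Language A)
    extends IsSgMarkovLang φ L : Prop where
  min_length : ∀ w ∈ L, ∀ v : List A, prodPlus φ v = prodPlus φ w → w.length ≤ v.length

/-- A monoid Markov language for `M` over `A` (with respect to `φ`): a regular,
prefix-closed language mapping bijectively onto `M` under `φ*`. -/
structure IsMonMarkovLang {A M : Type} [Monoid M] (φ : A → M) (L : Language A) : Prop where
  regular : RegularLang L
  prefix_closed : ∀ u v : List A, u ++ v ∈ L → u ∈ L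
  unique_rep : ∀ m : M, ∃! w : List A, w ∈ L ∧ monProd φ w = m

/-- A robust monoid Markov language: additionally every word of `L` has minimal
length among words representing the same element. -/
structure IsRobustMonMarkovLang {A M : Type} [Monoid M] (φ : A → M) (L : Language A)
    extends IsMonMarkovLang φ L : Prop where
  min_length : ∀ w ∈ L, ∀ v : List A, monProd φ v = monProd φ w → w.length ≤ v.length

/-- `S` is Markov as a semigroup. -/
def SgMarkov (S : Type) [Semigroup S] : Prop :=
  ∃ (A : Type) (_ : Fintype A) (φ : A → S),
    (∀ s : S, ∃ w : List A, prodPlus φ w = some s) ∧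
    ∃ L : Language A, IsSgMarkovLang φ L

/-- `S` is robustly Markov (as a semigroup) with respect to some alphabet. -/
def SgRobustlyMarkov (S : Type) [Semigroup S] : Prop :=
  ∃ (A : Type) (_ : Fintype A) (φ : A → S),
    (∀ s : S, ∃ w : List A, prodPlus φ w = some s) ∧
    ∃ L : Language A, IsRobustSgMarkovLang φ L

/-- `S` is strongly Markov (as a semigroup). -/
def SgStronglyMarkov (S : Type) [Semigroup S] : Prop :=
  ∀ (A : Type) [Fintype A] (φ : A → S),
    (∀ s : S, ∃ w : List A, prodPlus φ w = some s) →
    ∃ L : Language A, IsRobustSgMarkovLang φ L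

/-- `M` is Markov as a monoid. -/
def MonMarkov (M : Type) [Monoid M] : Prop :=
  ∃ (A : Type) (_ : Fintype A) (φ : A → M),
    Surjective (monProd φ) ∧ ∃ L : Language A, IsMonMarkovLang φ L

/-- `M` is robustly Markov (as a monoid) with respect to some alphabet. -/
def MonRobustlyMarkov (M : Type) [Monoid M] : Prop :=
  ∃ (A : Type) (_ : Fintype A) (φ : A → M),
    Surjective (monProd φ) ∧ ∃ L : Language A, IsRobustMonMarkovLang φ L

/-- `M` is strongly Markov (as a monoid). -/
def MonStronglyMarkov (M : Type) [Monoid M] : Prop :=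
  ∀ (A : Type) [Fintype A] (φ : A → M),
    Surjective (monProd φ) →
    ∃ L : Language A, IsRobustMonMarkovLang φ L

/-!
Both directions only change how the identity is represented. In a robust monoid language `L`
the identity is represented by the empty word; exchanging it for `u ++ [b]`, where `u ∈ L`
represents a shortest nonempty word for `1` with its last letter `b` removed, keeps the
language `+`-prefix-closed and geodesic. Conversely, adjoining a letter `e ↦ 1` turns a monoid
generating set into a semigroup generating set. In a robust semigroup language over the larger
alphabet, geodesicity forbids the letter `e` and every proper nonempty prefix with product `1`,
except in the representative `r` of `1`; so the words of `L` over the old alphabet, with `r`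
exchanged for the empty word, form a robust monoid language. Regularity survives both
exchanges because changing a language in finitely many words does not affect the finiteness of
its set of left quotients.
-/

namespace Language

variable {α β : Type*}

theorem IsRegular.of_finite_symmDiff {L L' : Language α} (hL : L.IsRegular)
    (hfin : {w | ¬(w ∈ L ↔ w ∈ L')}.Finite) : L'.IsRegular := by
  refine .of_finite_range_leftQuotient ?_
  set P : Set (List α) := ⋃ w ∈ {w | ¬(w ∈ L ↔ w ∈ L')}, {x | x <+: w}
  have hP : P.Finite := hfin.biUnion fun w _ =>
    w.inits.finite_toSet.subset fun x hx => (List.mem_inits x w).2 hx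
  refine (hL.finite_range_leftQuotient.union (hP.image L'.leftQuotient)).subset ?_
  rintro _ ⟨x, rfl⟩
  by_cases hx : x ∈ P
  · exact Or.inr ⟨x, hx, rfl⟩
  · refine Or.inl ⟨x, ?_⟩
    ext y
    by_contra hy
    exact hx (Set.mem_biUnion (x := x ++ y) hy (List.prefix_append x y))

theorem IsRegular.preimage_map {L : Language α} (hL : L.IsRegular) (f : β → α) :
    Language.IsRegular (List.map f ⁻¹' L) := by
  obtain ⟨σ, _, M, rfl⟩ := hL
  exact ⟨σ, inferInstance, M.comap f, M.accepts_comap f⟩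

def replaceNil (L : Language α) (r : List α) : Language α :=
  {w | (w ∈ L ∧ w ≠ []) ∨ w = r}

@[simp]
theorem mem_replaceNil {L : Language α} {r w : List α} :
    w ∈ L.replaceNil r ↔ (w ∈ L ∧ w ≠ []) ∨ w = r :=
  Iff.rfl

def replaceByNil (L : Language (Option α)) (r : List (Option α)) : Language α :=
  {v | (v.map some ∈ L ∧ v.map some ≠ r) ∨ v = []}

@[simp]
theorem mem_replaceByNil {L : Language (Option α)} {r : List (Option α)} {v : List α} :
    v ∈ L.replaceByNil r ↔ (v.map some ∈ L ∧ v.map some ≠ r) ∨ v = [] :=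
  Iff.rfl

end Language

theorem List.eq_map_some_of_none_notMem {α : Type*} :
    ∀ {l : List (Option α)}, none ∉ l → ∃ v : List α, l = v.map some
  | [], _ => ⟨[], rfl⟩
  | none :: _, h => absurd List.mem_cons_self h
  | some a :: _, h =>
    have ⟨v, hv⟩ := eq_map_some_of_none_notMem fun hn => h (List.mem_cons_of_mem _ hn)
    ⟨a :: v, by rw [hv, List.map_cons]⟩

section Words

variable {A M : Type} [Monoid M] (φ : A → M)

@[simp]
theorem monProd_nil : monProd φ [] = 1 := rfl

@[simp]
theorem monProd_append (u v : List A) : monProd φ (u ++ v) = monProd φ u * monProd φ v := by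
  simp [monProd]

@[simp]
theorem monProd_cons (a : A) (w : List A) : monProd φ (a :: w) = φ a * monProd φ w := by
  simp [monProd]

theorem prodPlus_of_ne_nil {w : List A} (hw : w ≠ []) : prodPlus φ w = some (monProd φ w) := by
  obtain _ | ⟨a, w⟩ := w
  · exact absurd rfl hw
  · simp [prodPlus, monProd, List.prod_eq_foldl, List.foldl_map]

theorem prodPlus_eq_some_iff {w : List A} {m : M} :
    prodPlus φ w = some m ↔ w ≠ [] ∧ monProd φ w = m := by
  obtain _ | ⟨a, w⟩ := w
  · simp [prodPlus]
  · simp [prodPlus_of_ne_nil]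

@[simp]
theorem monProd_elim'_map_some (v : List A) :
    monProd (Option.elim' 1 φ) (v.map some) = monProd φ v := by
  simp [monProd, List.map_map, Function.comp_def]

end Words

namespace IsRobustMonMarkovLang

variable {A M : Type} [Monoid M] {φ : A → M} {L : Language A}

theorem injOn (hL : IsRobustMonMarkovLang φ L) : Set.InjOn (monProd φ) L :=
  fun _ hu _ hv huv => (hL.unique_rep _).unique ⟨hu, huv⟩ ⟨hv, rfl⟩

theorem nil_mem (hL : IsRobustMonMarkovLang φ L) : [] ∈ L := by
  obtain ⟨w, ⟨hw, hw1⟩, -⟩ := hL.unique_rep 1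
  have : w.length ≤ 0 := hL.min_length w hw [] hw1.symm
  rwa [List.length_eq_zero_iff.1 (Nat.le_zero.1 this)] at hw

theorem exists_shortest_one_rep (hL : IsRobustMonMarkovLang φ L)
    (h : ∃ w ≠ [], monProd φ w = 1) :
    ∃ u ∈ L, ∃ b : A, monProd φ (u ++ [b]) = 1 ∧
      ∀ v ≠ [], monProd φ v = 1 → (u ++ [b]).length ≤ v.length := by
  obtain ⟨r, ⟨hr, hr1⟩, hmin⟩ :=
    (measure List.length).wf.has_min {w | w ≠ [] ∧ monProd φ w = 1} h
  obtain ⟨x, b, rfl⟩ := (List.eq_nil_or_concat r).resolve_left hr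
  obtain ⟨u, ⟨hu, hux⟩, -⟩ := hL.unique_rep (monProd φ x)
  have hlen : u.length ≤ x.length := hL.min_length u hu x hux.symm
  rw [List.concat_eq_append] at hr1
  refine ⟨u, hu, b, by simpa [hux] using hr1, fun v hv hv1 => ?_⟩
  have : ¬v.length < (x.concat b).length := hmin v ⟨hv, hv1⟩
  simp only [List.concat_eq_append, List.length_append, List.length_singleton] at this ⊢
  omega

theorem toRobustSg (hL : IsRobustMonMarkovLang φ L) {u : List A} (hu : u ∈ L) {b : A}
    (hr1 : monProd φ (u ++ [b]) = 1)
    (hmin : ∀ v ≠ [], monProd φ v = 1 → (u ++ [b]).length ≤ v.length) :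
    IsRobustSgMarkovLang φ (L.replaceNil (u ++ [b])) where
  regular := by
    refine Language.IsRegular.of_finite_symmDiff hL.regular
      ((Set.toFinite {[], u ++ [b]}).subset fun w hw => ?_)
    by_contra! hne
    simp only [Set.mem_insert_iff, Set.mem_singleton_iff, not_or] at hne
    exact hw (by simp [hne.1, hne.2])
  not_empty_mem := by simp
  plus_prefix_closed x y hx hy hxy := by
    refine Or.inl ⟨?_, hx⟩
    obtain ⟨hxyL, -⟩ | hxy := hxy
    · exact hL.prefix_closed x y hxyL
    · have : x <+: u := by
        refine (List.prefix_concat_iff.1 (hxy ▸ List.prefix_append x y)).resolve_left ?_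
        rintro rfl
        simp [hy] at hxy
      obtain ⟨t, rfl⟩ := this
      exact hL.prefix_closed x t hu
  unique_rep s := by
    rcases eq_or_ne s 1 with rfl | hs
    · refine ⟨u ++ [b], ⟨Or.inr rfl, by simp [prodPlus_of_ne_nil, hr1]⟩, ?_⟩
      rintro w ⟨hw | rfl, hws⟩
      · obtain ⟨-, hw1⟩ := (prodPlus_eq_some_iff φ).1 hws
        exact absurd (hL.injOn hw.1 hL.nil_mem hw1) hw.2
      · rfl
    · obtain ⟨w, ⟨hw, hws⟩, -⟩ := hL.unique_rep s
      have hwne : w ≠ [] := by rintro rfl; exact hs hws.symm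
      refine ⟨w, ⟨Or.inl ⟨hw, hwne⟩, by rw [prodPlus_of_ne_nil φ hwne, hws]⟩, ?_⟩
      rintro x ⟨hx | rfl, hxs⟩ <;> obtain ⟨-, hxs⟩ := (prodPlus_eq_some_iff φ).1 hxs
      · exact hL.injOn hx.1 hw (hxs.trans hws.symm)
      · exact absurd (hxs.symm.trans hr1) hs
  min_length w hw v hvw := by
    have hwne : w ≠ [] := by rintro rfl; simp at hw
    obtain ⟨hvne, hvw⟩ := (prodPlus_eq_some_iff φ).1 (hvw.trans (prodPlus_of_ne_nil φ hwne))
    obtain ⟨hw, -⟩ | rfl := hw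
    · exact hL.min_length w hw v hvw
    · exact hmin v hvne (hvw.trans hr1)

end IsRobustMonMarkovLang

theorem MonStronglyMarkov.sgStronglyMarkov {M : Type} [Monoid M] (h : MonStronglyMarkov M) :
    SgStronglyMarkov M := by
  intro A _ φ hφ
  have hsurj : Surjective (monProd φ) := fun m =>
    have ⟨w, hw⟩ := hφ m
    ⟨w, ((prodPlus_eq_some_iff φ).1 hw).2⟩
  obtain ⟨L, hL⟩ := h A φ hsurj
  obtain ⟨w, hw⟩ := hφ 1
  obtain ⟨u, hu, b, hr1, hmin⟩ := hL.exists_shortest_one_rep ⟨w, (prodPlus_eq_some_iff φ).1 hw⟩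
  exact ⟨_, hL.toRobustSg hu hr1 hmin⟩

namespace IsRobustSgMarkovLang

variable {A M : Type} [Monoid M] {φ : A → M} {L : Language A}

theorem ne_nil (hL : IsRobustSgMarkovLang φ L) {w : List A} (hw : w ∈ L) : w ≠ [] :=
  fun h => hL.not_empty_mem (h ▸ hw)

theorem injOn (hL : IsRobustSgMarkovLang φ L) : Set.InjOn (prodPlus φ) L := fun u hu _ hv huv =>
  have hpu : prodPlus φ u = some (monProd φ u) := prodPlus_of_ne_nil φ (hL.ne_nil hu)
  (hL.unique_rep _).unique ⟨hu, hpu⟩ ⟨hv, huv ▸ hpu⟩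

theorem monProd_ne_one_of_ne (hL : IsRobustSgMarkovLang φ L) {r w : List A} (hr : r ∈ L)
    (hr1 : monProd φ r = 1) (hw : w ∈ L) (hwr : w ≠ r) : monProd φ w ≠ 1 := fun hw1 =>
  hwr <| hL.injOn hw hr <| by
    rw [prodPlus_of_ne_nil φ (hL.ne_nil hw), prodPlus_of_ne_nil φ (hL.ne_nil hr), hw1, hr1]

-- Otherwise `x ++ z` would be a shorter representative of the same element.
theorem monProd_infix_ne_one (hL : IsRobustSgMarkovLang φ L) {x y z : List A}
    (h : x ++ y ++ z ∈ L) (hy : y ≠ []) (hxz : x ++ z ≠ []) : monProd φ y ≠ 1 := fun hy1 => by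
  have hlen := hL.min_length _ h (x ++ z) <| by
    rw [prodPlus_of_ne_nil φ hxz, prodPlus_of_ne_nil φ (hL.ne_nil h)]
    simp [hy1]
  have : 0 < y.length := List.length_pos_iff.2 hy
  simp only [List.length_append] at hlen
  omega

theorem forall_mem_ne_one (hL : IsRobustSgMarkovLang φ L) {w : List A} (hw : w ∈ L)
    (hw1 : monProd φ w ≠ 1) : ∀ a ∈ w, φ a ≠ 1 := fun a ha ha1 => by
  obtain ⟨x, z, rfl⟩ := List.append_of_mem ha
  rw [← List.singleton_append, ← List.append_assoc] at hw hw1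
  refine hL.monProd_infix_ne_one hw (List.cons_ne_nil a []) (fun hxz => hw1 ?_) (by simp [ha1])
  simp [List.append_eq_nil_iff.1 hxz, ha1]

theorem toRobustMon {L : Language (Option A)} (hL : IsRobustSgMarkovLang (Option.elim' 1 φ) L)
    {r : List (Option A)} (hr : r ∈ L) (hr1 : monProd (Option.elim' 1 φ) r = 1) :
    IsRobustMonMarkovLang φ (L.replaceByNil r) where
  regular := by
    have hfin : ({[]} ∪ List.map some ⁻¹' {r} : Set (List A)).Finite :=
      (Set.finite_singleton []).union
        ((Set.finite_singleton r).preimage (List.map_injective_iff.2 (Option.some_injective A)).injOn)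
    refine Language.IsRegular.of_finite_symmDiff (Language.IsRegular.preimage_map hL.regular some)
      (hfin.subset fun w hw => ?_)
    by_contra! hne
    simp only [Set.mem_union, Set.mem_singleton_iff, Set.mem_preimage, not_or] at hne
    exact hw ⟨fun h => Or.inl ⟨h, hne.2⟩, fun h => (h.resolve_right hne.1).1⟩
  prefix_closed x y hxy := by
    rcases hxy with ⟨hxyL, hxyr⟩ | hxy
    · rcases eq_or_ne y [] with rfl | hy
      · rw [List.append_nil] at hxyL hxyr
        exact Or.inl ⟨hxyL, hxyr⟩
      rcases eq_or_ne x [] with rfl | hx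
      · exact Or.inr rfl
      rw [List.map_append] at hxyL
      refine Or.inl ⟨hL.plus_prefix_closed _ _ (by simpa) (by simpa) hxyL, fun hxr => ?_⟩
      exact hL.monProd_infix_ne_one (x := []) hxyL (by simpa) (by simpa) (hxr ▸ hr1)
    · exact Or.inr (List.append_eq_nil_iff.1 hxy).1
  unique_rep m := by
    rcases eq_or_ne m 1 with rfl | hm
    · refine ⟨[], ⟨Or.inr rfl, rfl⟩, ?_⟩
      rintro x ⟨⟨hx, hxr⟩ | rfl, hx1⟩
      · exact absurd (by simpa using hx1) (hL.monProd_ne_one_of_ne hr hr1 hx hxr)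
      · rfl
    obtain ⟨w, ⟨hw, hwm⟩, -⟩ := hL.unique_rep m
    obtain ⟨-, hwm⟩ := (prodPlus_eq_some_iff _).1 hwm
    have hwr : w ≠ r := by rintro rfl; exact hm (hwm.symm.trans hr1)
    obtain ⟨v, rfl⟩ := List.eq_map_some_of_none_notMem fun hn =>
      hL.forall_mem_ne_one hw (hwm ▸ hm) none hn rfl
    refine ⟨v, ⟨Or.inl ⟨hw, hwr⟩, by simpa using hwm⟩, ?_⟩
    rintro x ⟨⟨hx, -⟩ | rfl, hxm⟩
    · refine List.map_injective_iff.2 (Option.some_injective A) (hL.injOn hx hw ?_)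
      rw [prodPlus_of_ne_nil _ (hL.ne_nil hx), prodPlus_of_ne_nil _ (hL.ne_nil hw)]
      simpa [hxm] using hwm.symm
    · exact absurd hxm.symm hm
  min_length w hw v hvw := by
    rcases hw with ⟨hw, hwr⟩ | rfl
    · have hw1 := hL.monProd_ne_one_of_ne hr hr1 hw hwr
      have hvne : v ≠ [] := by
        rintro rfl
        exact hw1 (by simpa using hvw.symm)
      simpa using hL.min_length _ hw (v.map some) (by
        rw [prodPlus_of_ne_nil _ (by simpa), prodPlus_of_ne_nil _ (hL.ne_nil hw)]
        simpa using hvw)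
    · simp

end IsRobustSgMarkovLang

theorem SgStronglyMarkov.monStronglyMarkov {M : Type} [Monoid M] (h : SgStronglyMarkov M) :
    MonStronglyMarkov M := by
  intro A _ φ hφ
  have hsurj : ∀ m, ∃ w, prodPlus (Option.elim' 1 φ) w = some m := by
    intro m
    obtain ⟨v, rfl⟩ := hφ m
    rcases eq_or_ne v [] with rfl | hv
    · exact ⟨[none], rfl⟩
    · exact ⟨v.map some, by rw [prodPlus_of_ne_nil _ (by simpa), monProd_elim'_map_some]⟩
  obtain ⟨L, hL⟩ := h (Option A) _ hsurj
  obtain ⟨r, ⟨hr, hr1⟩, -⟩ := hL.unique_rep 1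
  exact ⟨_, hL.toRobustMon hr ((prodPlus_eq_some_iff _).1 hr1).2⟩

/-- A monoid is strongly Markov as a semigroup iff it is strongly Markov as a monoid. -/
theorem stmt5 {M : Type} [Monoid M] : SgStronglyMarkov M ↔ MonStronglyMarkov M :=
  ⟨SgStronglyMarkov.monStronglyMarkov, MonStronglyMarkov.sgStronglyMarkov⟩
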